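/- There exists a constant C > 0 such that for all x, h ∈ ℝ² with x ≠ 0 and |h| ≤ |x|/2, one has | x/|x| - (x+h)/|x+h| |² ≤ |h|²/|x|² - ⟨x, h⟩²/|x|⁴ + C |h|³/|x|³. -/

import Mathlib

/-!
Let `θ` be the angle between `x` and `x + h`. The squared chord `2 - 2 cos θ` equals
`2 sin² θ / (1 + cos θ)`; cleared of denominators its numerator is the Gram determinant of
`x, x + h`, which equals that of `x, h`, namely `‖x‖²‖h‖² - ⟪x, h⟫²`, and its denominator
`‖x‖‖x + h‖(‖x‖‖x + h‖ + ⟪x, x + h⟫)` is at least `2‖x‖²(‖x‖ - ‖h‖)²`. Replacing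
`(‖x‖ - ‖h‖)²` by `‖x‖²` costs a relative error `O(‖h‖ / ‖x‖)`, and the Gram determinant is at
most `‖x‖²‖h‖²`, which gives the cubic remainder with `C = 8`.
-/

open RealInnerProductSpace

section InnerProductSpace

variable {F : Type*} [NormedAddCommGroup F] [InnerProductSpace ℝ F]

lemma norm_inv_norm_smul_sub_sq (x y : F) (hx : x ≠ 0) (hy : y ≠ 0)
    (hxy : ‖x‖ * ‖y‖ + ⟪x, y⟫ ≠ 0) :
    ‖‖x‖⁻¹ • x - ‖y‖⁻¹ • y‖ ^ 2 =
      2 * (‖x‖ ^ 2 * ‖y‖ ^ 2 - ⟪x, y⟫ ^ 2) / (‖x‖ * ‖y‖ * (‖x‖ * ‖y‖ + ⟪x, y⟫)) := by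
  have ha : ‖x‖ ≠ 0 := norm_ne_zero_iff.mpr hx
  have hb : ‖y‖ ≠ 0 := norm_ne_zero_iff.mpr hy
  rw [norm_sub_sq_real, real_inner_smul_left, real_inner_smul_right, norm_smul, norm_smul,
    norm_inv, norm_norm, norm_inv, norm_norm]
  field_simp
  ring

lemma norm_sq_mul_norm_add_sq_sub_inner_sq (x h : F) :
    ‖x‖ ^ 2 * ‖x + h‖ ^ 2 - ⟪x, x + h⟫ ^ 2 = ‖x‖ ^ 2 * ‖h‖ ^ 2 - ⟪x, h⟫ ^ 2 := by
  rw [norm_add_sq_real, inner_add_right, real_inner_self_eq_norm_sq]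
  ring

lemma two_mul_norm_sq_mul_sub_sq_le (x h : F) (hhx : ‖h‖ ≤ ‖x‖) :
    2 * ‖x‖ ^ 2 * (‖x‖ - ‖h‖) ^ 2 ≤
      ‖x‖ * ‖x + h‖ * (‖x‖ * ‖x + h‖ + ⟪x, x + h⟫) := by
  have hb : ‖x‖ - ‖h‖ ≤ ‖x + h‖ := by
    simpa using norm_sub_norm_le x (-h)
  have ht : -(‖x‖ * ‖h‖) ≤ ⟪x, h⟫ := (abs_le.mp (abs_real_inner_le_norm x h)).1
  have hab : ‖x‖ * (‖x‖ - ‖h‖) ≤ ‖x‖ * ‖x + h‖ :=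
    mul_le_mul_of_nonneg_left hb (norm_nonneg x)
  have hsum : 2 * ‖x‖ * (‖x‖ - ‖h‖) ≤ ‖x‖ * ‖x + h‖ + ⟪x, x + h⟫ := by
    rw [inner_add_right, real_inner_self_eq_norm_sq]
    linarith
  calc 2 * ‖x‖ ^ 2 * (‖x‖ - ‖h‖) ^ 2
      = (‖x‖ * (‖x‖ - ‖h‖)) * (2 * ‖x‖ * (‖x‖ - ‖h‖)) := by ring
    _ ≤ ‖x‖ * ‖x + h‖ * (‖x‖ * ‖x + h‖ + ⟪x, x + h⟫) :=
      mul_le_mul hab hsum (by nlinarith [norm_nonneg x]) (by positivity)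

end InnerProductSpace

lemma div_sq_mul_sub_sq_le (a s G : ℝ) (ha : 0 < a) (hs : 0 ≤ s) (hsa : 2 * s ≤ a)
    (hGa : G ≤ a ^ 2 * s ^ 2) :
    G / (a ^ 2 * (a - s) ^ 2) ≤ G / a ^ 4 + 8 * s ^ 3 / a ^ 3 := by
  have has : a / 2 ≤ a - s := by linarith
  have key : G * (s * (2 * a - s)) ≤ a ^ 2 * s ^ 2 * (2 * a * s) :=
    mul_le_mul hGa (by nlinarith) (by nlinarith) (by positivity)
  calc G / (a ^ 2 * (a - s) ^ 2)
      = G / a ^ 4 + G * (s * (2 * a - s)) / (a ^ 4 * (a - s) ^ 2) := by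
        have : a - s ≠ 0 := by linarith
        field_simp
        ring
    _ ≤ G / a ^ 4 + a ^ 2 * s ^ 2 * (2 * a * s) / (a ^ 4 * (a / 2) ^ 2) := by
        gcongr
    _ = G / a ^ 4 + 8 * s ^ 3 / a ^ 3 := by
        field_simp
        ring

theorem stmt_13 :
    ∃ C : ℝ, 0 < C ∧ ∀ x h : EuclideanSpace ℝ (Fin 2), x ≠ 0 → ‖h‖ ≤ ‖x‖ / 2 →
      ‖‖x‖⁻¹ • x - ‖x + h‖⁻¹ • (x + h)‖ ^ 2 ≤
        ‖h‖ ^ 2 / ‖x‖ ^ 2 - ⟪x, h⟫ ^ 2 / ‖x‖ ^ 4 + C * ‖h‖ ^ 3 / ‖x‖ ^ 3 := by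
  refine ⟨8, by norm_num, fun x h hx hhx => ?_⟩
  have ha : 0 < ‖x‖ := norm_pos_iff.mpr hx
  have hden := two_mul_norm_sq_mul_sub_sq_le x h (by linarith [norm_nonneg h])
  have hden_pos : 0 < 2 * ‖x‖ ^ 2 * (‖x‖ - ‖h‖) ^ 2 := by
    have : 0 < ‖x‖ - ‖h‖ := by linarith
    positivity
  have hden_ne := (hden_pos.trans_le hden).ne'
  have hxh : x + h ≠ 0 :=
    norm_ne_zero_iff.mp (right_ne_zero_of_mul (left_ne_zero_of_mul hden_ne))
  have hgram : 0 ≤ ‖x‖ ^ 2 * ‖h‖ ^ 2 - ⟪x, h⟫ ^ 2 := by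
    nlinarith [abs_real_inner_le_norm x h, abs_nonneg ⟪x, h⟫, sq_abs ⟪x, h⟫]
  calc ‖‖x‖⁻¹ • x - ‖x + h‖⁻¹ • (x + h)‖ ^ 2
      = 2 * (‖x‖ ^ 2 * ‖h‖ ^ 2 - ⟪x, h⟫ ^ 2) /
          (‖x‖ * ‖x + h‖ * (‖x‖ * ‖x + h‖ + ⟪x, x + h⟫)) := by
        rw [norm_inv_norm_smul_sub_sq x (x + h) hx hxh
            (right_ne_zero_of_mul hden_ne),
          norm_sq_mul_norm_add_sq_sub_inner_sq]
    _ ≤ 2 * (‖x‖ ^ 2 * ‖h‖ ^ 2 - ⟪x, h⟫ ^ 2) / (2 * ‖x‖ ^ 2 * (‖x‖ - ‖h‖) ^ 2) :=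
        div_le_div_of_nonneg_left (by linarith) hden_pos hden
    _ = (‖x‖ ^ 2 * ‖h‖ ^ 2 - ⟪x, h⟫ ^ 2) / (‖x‖ ^ 2 * (‖x‖ - ‖h‖) ^ 2) := by
        rw [mul_assoc, mul_div_mul_left _ _ two_ne_zero]
    _ ≤ (‖x‖ ^ 2 * ‖h‖ ^ 2 - ⟪x, h⟫ ^ 2) / ‖x‖ ^ 4 + 8 * ‖h‖ ^ 3 / ‖x‖ ^ 3 :=
        div_sq_mul_sub_sq_le _ _ _ ha (norm_nonneg h) (by linarith)
          (by linarith [sq_nonneg ⟪x, h⟫])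
    _ = ‖h‖ ^ 2 / ‖x‖ ^ 2 - ⟪x, h⟫ ^ 2 / ‖x‖ ^ 4 + 8 * ‖h‖ ^ 3 / ‖x‖ ^ 3 := by
        field_simp
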